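/- arXiv:2407.04891 — 5 statements merged into one kernel-verified Lean document; each statement's English description precedes it below -/
import Mathlib

section
/- Let S be a commutative ring and F a formal group law over S. Then there exists a unique formal power series ι in one variable over S with zero constant coefficient such that F(x, ι(x)) = 0, where ι(x) is substituted into the second variable of F. -/
/- Common setup: substitution of multivariate power series, formal group laws,
formal inverses, and the variable–swapping operation. -/

open MvPowerSeries Finsupp

noncomputable section

variable {S : Type*} [CommRing S]

/-- Substitution of a family of multivariate power series (each intended to have zero
constant coefficient) into a power series in `k` variables.  When every `a j` has zero
constant coefficient, the coefficient of a monomial `m` of the substituted series only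
receives contributions from exponents `d` with `d j ≤ deg m`, so the finite sum below
computes the genuine substitution. -/
noncomputable def msubst {k n : ℕ} (a : Fin k → MvPowerSeries (Fin n) S)
    (F : MvPowerSeries (Fin k) S) : MvPowerSeries (Fin n) S :=
  fun m =>
    ∑ d ∈ Finset.Iic (equivFunOnFinite.symm fun _ : Fin k => m.sum fun _ e => e),
      MvPowerSeries.coeff d F * MvPowerSeries.coeff m (∏ j, a j ^ d j)

/-- `F ∈ S[[x,y]]` is a (one-dimensional, commutative) formal group law over `S`:
zero constant coefficient, commutativity `F(x,y) = F(y,x)`, unitality `F(x,0) = x`,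
and associativity `F(F(x,y),z) = F(x,F(y,z))`. -/
def IsFormalGroupLaw (F : MvPowerSeries (Fin 2) S) : Prop :=
  MvPowerSeries.constantCoeff F = 0 ∧
  msubst ![(X 1 : MvPowerSeries (Fin 2) S), X 0] F = F ∧
  msubst ![(X 0 : MvPowerSeries (Fin 2) S), 0] F = X 0 ∧
  msubst ![msubst ![(X 0 : MvPowerSeries (Fin 3) S), X 1] F, X 2] F
    = msubst ![(X 0 : MvPowerSeries (Fin 3) S), msubst ![(X 1 : MvPowerSeries (Fin 3) S), X 2] F] F

/-- `ι ∈ S[[x]]` is the formal inverse of `F`: it has zero constant coefficient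
and `F(x, ι(x)) = 0`. -/
def IsFormalInverse (F : MvPowerSeries (Fin 2) S) (ι : MvPowerSeries (Fin 1) S) : Prop :=
  MvPowerSeries.constantCoeff ι = 0 ∧
  msubst ![(X 0 : MvPowerSeries (Fin 1) S), ι] F = 0

/-- `ι(b)`, the substitution of `b` into the formal inverse `ι`. -/
noncomputable def fneg (ι : MvPowerSeries (Fin 1) S) {n : ℕ}
    (b : MvPowerSeries (Fin n) S) : MvPowerSeries (Fin n) S :=
  msubst ![b] ι

/-- `a −_F b := F(a, ι(b))`. -/
noncomputable def fsub (F : MvPowerSeries (Fin 2) S) (ι : MvPowerSeries (Fin 1) S) {n : ℕ}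
    (a b : MvPowerSeries (Fin n) S) : MvPowerSeries (Fin n) S :=
  msubst ![a, fneg ι b] F

/-- Substitution `g(a,b)` of two power series into a two-variable power series `g`. -/
noncomputable def gsub (g : MvPowerSeries (Fin 2) S) {n : ℕ}
    (a b : MvPowerSeries (Fin n) S) : MvPowerSeries (Fin n) S :=
  msubst ![a, b] g

/-- The map on multivariate power series interchanging the variables `x_i` and `x_j`
(the renaming along the transposition `(i,j)`). -/
def swapVars {n : ℕ} (i j : Fin n) (f : MvPowerSeries (Fin n) S) :
    MvPowerSeries (Fin n) S :=
  fun m => f (equivMapDomain (Equiv.swap i j) m)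

/-! The coefficient of `y` in `F` is `1` (compare the linear terms of `F(x,0) = x` and
`F(y,x) = F(x,y)`), so for `ι` without constant term the degree-`n` coefficient of
`F(x, ι(x))` is `ιₙ` plus an expression in the coefficients of `ι` of degree `< n`.
Hence two inverses cannot first differ in any degree, and an inverse is obtained as a fixed
point of the causal map on coefficient sequences sending `c` to `n ↦ cₙ - [xⁿ] F(x, ι_c(x))`
for `n > 0` (and `0 ↦ 0`), where `ι_c = ∑_{k > 0} c_k xᵏ`. -/

theorem exists_isFixedPt_of_causal {α : Type*} [Nonempty α] (T : (ℕ → α) → ℕ → α)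
    (hT : ∀ f g n, (∀ k < n, f k = g k) → T f n = T g n) : ∃ f, Function.IsFixedPt T f := by
  let f : ℕ → α := Nat.strongRec fun n rec =>
    T (fun k => if h : k < n then rec k h else Classical.arbitrary α) n
  refine ⟨f, funext fun n => ?_⟩
  change T f n = Nat.strongRec _ n
  rw [Nat.strongRec_eq]
  exact hT _ _ n fun k hk => by rw [dif_pos hk]

section Order

variable {σ R : Type*} [CommRing R] {f g a : MvPowerSeries σ R} {n : ℕ}

lemma MvPowerSeries.le_order_pow_sub_pow (hf : constantCoeff f = 0) (hg : constantCoeff g = 0)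
    (h : n ≤ (f - g).order) {j : ℕ} (hj : j ≠ 1) :
    (n + 1 : ℕ∞) ≤ (f ^ j - g ^ j).order := by
  obtain rfl | hj2 : j = 0 ∨ 2 ≤ j := by omega
  · simp
  have hq : 1 ≤ (∑ i ∈ Finset.range j, f ^ i * g ^ (j - 1 - i)).order := by
    rw [one_le_order_iff_constCoeff_eq_zero, map_sum]
    simp only [map_mul, map_pow, hf, hg, geom_sum₂_self, zero_pow (by omega : j - 1 ≠ 0),
      mul_zero]
  rw [← geom_sum₂_mul]
  calc (n + 1 : ℕ∞) ≤ _ + _ := by rw [add_comm]; gcongr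
    _ ≤ _ := le_order_mul

lemma MvPowerSeries.le_order_pow_mul_pow_sub_pow (ha : constantCoeff a = 0)
    (hf : constantCoeff f = 0) (hg : constantCoeff g = 0) (h : n ≤ (f - g).order) {i j : ℕ}
    (hij : i ≠ 0 ∨ j ≠ 1) : (n + 1 : ℕ∞) ≤ (a ^ i * (f ^ j - g ^ j)).order := by
  refine le_trans ?_ le_order_mul
  obtain rfl | hj := eq_or_ne j 1
  · have hi : (1 : ℕ∞) ≤ i := by
      exact_mod_cast Nat.one_le_iff_ne_zero.mpr (hij.resolve_right (by simp))
    rw [pow_one, pow_one, add_comm]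
    exact add_le_add (hi.trans (le_order_pow_of_constantCoeff_eq_zero i ha)) h
  · calc (n + 1 : ℕ∞) = 0 + (n + 1) := (zero_add _).symm
      _ ≤ _ := add_le_add bot_le (le_order_pow_sub_pow hf hg h hj)

end Order

lemma constantCoeff_msubst {k n : ℕ} (a : Fin k → MvPowerSeries (Fin n) S)
    (F : MvPowerSeries (Fin k) S) : constantCoeff (msubst a F) = constantCoeff F := by
  rw [← coeff_zero_eq_constantCoeff_apply, ← coeff_zero_eq_constantCoeff_apply]
  have h0 : (equivFunOnFinite.symm fun _ : Fin k => 0) = ⊥ := by rw [bot_eq_zero]; ext; simp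
  show ∑ d ∈ Finset.Iic _, _ = _
  rw [sum_zero_index, h0, Finset.Iic_bot, Finset.sum_singleton, bot_eq_zero]
  simp

lemma coeff_msubst_pair {k : ℕ} (F : MvPowerSeries (Fin 2) S) (a b : MvPowerSeries (Fin k) S)
    (m : Fin k →₀ ℕ) :
    coeff m (msubst ![a, b] F) = ∑ d ∈ Finset.Iic (equivFunOnFinite.symm fun _ => m.degree),
      coeff d F * coeff m (a ^ d 0 * b ^ d 1) := by
  simp [msubst, coeff_apply, Fin.prod_univ_two, degree_apply, Finsupp.sum]

lemma coeff_single_one_msubst_pair {k : ℕ} (F : MvPowerSeries (Fin 2) S)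
    {a b : MvPowerSeries (Fin k) S} (ha : constantCoeff a = 0) (hb : constantCoeff b = 0)
    (i : Fin k) :
    coeff (single i 1) (msubst ![a, b] F) =
      coeff (single 0 1) F * coeff (single i 1) a +
        coeff (single 1 1) F * coeff (single i 1) b := by
  have hne : (single 0 1 : Fin 2 →₀ ℕ) ≠ single 1 1 := by simp [single_left_inj]
  rw [coeff_msubst_pair, degree_single, ← Finset.sum_subset (s₁ := {single 0 1, single 1 1}),
    Finset.sum_pair hne]
  · simp
  · intro d hd
    simp only [Finset.mem_insert, Finset.mem_singleton] at hd
    rcases hd with rfl | rfl <;> simp [Finset.mem_Iic, le_def, Fin.forall_fin_two]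
  · intro d _ hd
    have hd1 : d 0 + d 1 ≠ 1 := by
      intro h
      simp only [Finset.mem_insert, Finset.mem_singleton] at hd
      obtain ⟨h0, h1⟩ | ⟨h0, h1⟩ : (d 0 = 1 ∧ d 1 = 0) ∨ (d 0 = 0 ∧ d 1 = 1) := by
        omega
      · exact hd (.inl (by ext j; fin_cases j <;> simp [h0, h1]))
      · exact hd (.inr (by ext j; fin_cases j <;> simp [h0, h1]))
    obtain ⟨h0, h1⟩ | h2 : (d 0 = 0 ∧ d 1 = 0) ∨ 2 ≤ d 0 + d 1 := by omega
    · simp [h0, h1, coeff_one]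
    · refine mul_eq_zero_of_right _ (coeff_of_lt_order ?_)
      calc (((single i 1 : Fin k →₀ ℕ).degree : ℕ) : ℕ∞) < 2 := by simp
        _ ≤ d 0 + d 1 := by exact_mod_cast h2
        _ ≤ _ := add_le_add (le_order_pow_of_constantCoeff_eq_zero _ ha)
                  (le_order_pow_of_constantCoeff_eq_zero _ hb)
        _ ≤ _ := le_order_mul

lemma coeff_single_one_one_eq_one {F : MvPowerSeries (Fin 2) S}
    (hcomm : msubst ![(X 1 : MvPowerSeries (Fin 2) S), X 0] F = F)
    (hunit : msubst ![(X 0 : MvPowerSeries (Fin 2) S), 0] F = X 0) :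
    coeff (single 1 1) F = 1 := by
  have hx : coeff (single 0 1) F = 1 := by
    simpa [coeff_single_one_msubst_pair F (constantCoeff_X 0) (map_zero _), coeff_X]
      using congrArg (coeff (single 0 1)) hunit
  simpa [coeff_single_one_msubst_pair F (constantCoeff_X 1) (constantCoeff_X 0), coeff_X,
    single_left_inj, hx] using (congrArg (coeff (single 1 1)) hcomm).symm

lemma coeff_msubst_sub_msubst {k : ℕ} {F : MvPowerSeries (Fin 2) S}
    (hF : coeff (single 1 1) F = 1) {a ι ι' : MvPowerSeries (Fin k) S}
    (ha : constantCoeff a = 0) (hι : constantCoeff ι = 0) (hι' : constantCoeff ι' = 0)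
    {n : ℕ} (h : n ≤ (ι - ι').order) {m : Fin k →₀ ℕ} (hm : m.degree ≤ n) :
    coeff m (msubst ![a, ι] F - msubst ![a, ι'] F) = coeff m (ι - ι') := by
  rw [map_sub, coeff_msubst_pair, coeff_msubst_pair, ← Finset.sum_sub_distrib,
    Finset.sum_eq_single (single 1 1)]
  · simp [hF]
  · intro d _ hd
    rw [← mul_sub, ← map_sub, ← mul_sub]
    refine mul_eq_zero_of_right _ (coeff_of_lt_order ?_)
    refine lt_of_lt_of_le ?_ (le_order_pow_mul_pow_sub_pow ha hι hι' h ?_)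
    · exact_mod_cast Nat.lt_succ_of_le hm
    · by_contra! hd'
      exact hd (by ext j; fin_cases j <;> simp [hd'.1, hd'.2])
  · intro hm0
    have hdeg : m.degree = 0 := by
      by_contra hne
      exact hm0 (by
        simpa [le_def, Fin.forall_fin_two, single_apply, Nat.one_le_iff_ne_zero] using hne)
    rw [← mul_sub, ← map_sub]
    refine mul_eq_zero_of_right _ (coeff_of_lt_order ?_)
    rw [hdeg, Nat.cast_zero]
    exact zero_lt_one.trans_le (one_le_order_iff_constCoeff_eq_zero.mpr (by simp [hι, hι']))

lemma eq_of_msubst_eq {k : ℕ} {F : MvPowerSeries (Fin 2) S}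
    (hF : coeff (single 1 1) F = 1) {a ι ι' : MvPowerSeries (Fin k) S}
    (ha : constantCoeff a = 0) (hι : constantCoeff ι = 0) (hι' : constantCoeff ι' = 0)
    (h : msubst ![a, ι] F = msubst ![a, ι'] F) : ι = ι' := by
  by_contra hne
  obtain ⟨d, hd, hdeg⟩ :=
    exists_coeff_ne_zero_and_order (ne_zero_iff_order_finite.mp (sub_ne_zero.mpr hne))
  rw [← coeff_msubst_sub_msubst hF ha hι hι' hdeg.le le_rfl, h, sub_self, map_zero] at hd
  exact hd rfl

/-- `c 0` is discarded: the zero constant coefficient for every `c` is what makes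
`inverseStep` causal. -/
def seriesOfPosCoeffs (c : ℕ → S) : MvPowerSeries (Fin 1) S :=
  fun m => if m = 0 then 0 else c m.degree

lemma constantCoeff_seriesOfPosCoeffs (c : ℕ → S) :
    constantCoeff (seriesOfPosCoeffs c) = 0 := by
  rw [← coeff_zero_eq_constantCoeff_apply, coeff_apply]
  exact if_pos rfl

lemma coeff_seriesOfPosCoeffs (c : ℕ → S) {m : Fin 1 →₀ ℕ} (hm : m ≠ 0) :
    coeff m (seriesOfPosCoeffs c) = c m.degree :=
  if_neg hm

def inverseStep (F : MvPowerSeries (Fin 2) S) (c : ℕ → S) (n : ℕ) : S :=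
  if n = 0 then 0 else
    c n - coeff (single 0 n) (msubst ![(X 0 : MvPowerSeries (Fin 1) S), seriesOfPosCoeffs c] F)

lemma inverseStep_causal {F : MvPowerSeries (Fin 2) S} (hF : coeff (single 1 1) F = 1)
    (f g : ℕ → S) (n : ℕ) (h : ∀ k < n, f k = g k) :
    inverseStep F f n = inverseStep F g n := by
  unfold inverseStep
  split_ifs with hn
  · rfl
  have hord : (n : ℕ∞) ≤ (seriesOfPosCoeffs f - seriesOfPosCoeffs g).order := by
    refine nat_le_order fun d hd => ?_
    rcases eq_or_ne d 0 with rfl | hd0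
    · simp [constantCoeff_seriesOfPosCoeffs]
    · rw [map_sub, coeff_seriesOfPosCoeffs f hd0, coeff_seriesOfPosCoeffs g hd0, h _ hd, sub_self]
  have key := coeff_msubst_sub_msubst hF (constantCoeff_X 0) (constantCoeff_seriesOfPosCoeffs f)
    (constantCoeff_seriesOfPosCoeffs g) hord (m := single 0 n) (by simp)
  have hn' : single (0 : Fin 1) n ≠ 0 := by simpa using hn
  rw [map_sub, map_sub, coeff_seriesOfPosCoeffs f hn', coeff_seriesOfPosCoeffs g hn',
    degree_single] at key
  linear_combination -key

lemma isFormalInverse_seriesOfPosCoeffs {F : MvPowerSeries (Fin 2) S}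
    (hF : constantCoeff F = 0) {c : ℕ → S} (hc : Function.IsFixedPt (inverseStep F) c) :
    IsFormalInverse F (seriesOfPosCoeffs c) := by
  refine ⟨constantCoeff_seriesOfPosCoeffs c, ext fun m => ?_⟩
  rw [unique_single m, map_zero]
  rcases eq_or_ne (m default) 0 with hn | hn
  · rw [hn, single_zero, coeff_zero_eq_constantCoeff_apply, constantCoeff_msubst, hF]
  · have := congrFun hc (m default)
    rw [inverseStep, if_neg hn, sub_eq_self] at this
    exact this

/-- every formal group law over a commutative ring `S` has a unique formal
inverse: a power series `ι ∈ S[[x]]` with zero constant coefficient and `F(x, ι(x)) = 0`. -/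
theorem formalGroupLaw_exists_unique_formal_inverse
    (F : MvPowerSeries (Fin 2) S) (hF : IsFormalGroupLaw F) :
    ∃! ι : MvPowerSeries (Fin 1) S, IsFormalInverse F ι := by
  obtain ⟨hF0, hcomm, hunit, -⟩ := hF
  have hy : coeff (single 1 1) F = 1 := coeff_single_one_one_eq_one hcomm hunit
  obtain ⟨c, hc⟩ := exists_isFixedPt_of_causal (inverseStep F) (inverseStep_causal hy)
  have hinv := isFormalInverse_seriesOfPosCoeffs hF0 hc
  exact ⟨_, hinv, fun ι hι => eq_of_msubst_eq hy (constantCoeff_X 0) hι.1 hinv.1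
    (hι.2.trans hinv.2.symm)⟩

end
end

section
/- Let S be a commutative ring and F a formal group law over S with formal inverse ι. Then there exists a unique power series g(x,y) ∈ S[[x,y]] such that x − y = (x −_F y)·g(x,y), and this g is an invertible element of S[[x,y]]. -/
/- Common setup: substitution of multivariate power series, formal group laws,
formal inverses, and the variable–swapping operation. -/

open MvPowerSeries Finsupp

noncomputable section

variable {S : Type*} [CommRing S]

/-! Write `D = x −_F y`. Substituting `(F(x,y), y)` and `(D, y)` for `(x, y)` gives ring
endomorphisms `φ`, `ψ` of `S[[x,y]]` with `ψ ∘ φ = id`, `φ D = x` and `ψ F = x`, by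
associativity and `F(y, ι y) = 0`. Since `F(0,y) = y`, `F - y = x·h`, and setting `y = 0`
gives `x·h(x,0) = x`, so `h(x,0) = 1` and `h` is a unit. Applying `ψ` to `F - y = x·h` gives
`x - y = D·ψ(h)`; conversely, applying `φ` to `x - y = D·g` gives `x·h = x·φ(g)`, so
`φ g = h` and `g = ψ h`. -/

namespace MvPowerSeries

variable {σ τ : Type*}

theorem coeff_prod_pow_eq_zero_of_degree_lt {a : σ → MvPowerSeries τ S}
    (ha : ∀ i, constantCoeff (a i) = 0) {d : σ →₀ ℕ} {m : τ →₀ ℕ}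
    (h : m.degree < d.degree) :
    coeff m (d.prod fun i e => a i ^ e) = 0 := by
  refine coeff_of_lt_order ((Nat.cast_lt.mpr h).trans_le (le_trans ?_ (le_order_prod _ _)))
  rw [degree_apply, Nat.cast_sum]
  exact Finset.sum_le_sum fun i _ => le_order_pow_of_constantCoeff_eq_zero _ (ha i)

@[simp]
theorem subst_apply_zero (a : σ → MvPowerSeries τ S) :
    subst a (0 : MvPowerSeries σ S) = 0 := by
  simpa using subst_C (a := a) (0 : S)

theorem constantCoeff_subst_of_constantCoeff_eq_zero {a : σ → MvPowerSeries τ S}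
    (ha : HasSubst a) (ha' : ∀ i, constantCoeff (a i) = 0) (f : MvPowerSeries σ S) :
    constantCoeff (subst a f) = constantCoeff f := by
  have h := constantCoeff_subst_eq_zero ha ha' (f := f - C (constantCoeff f)) (by simp)
  rwa [subst_sub ha, subst_C, map_sub, constantCoeff_C, sub_eq_zero] at h

theorem constantCoeff_subst_single_eq_zero {f : MvPowerSeries (Fin 1) S}
    (hf : constantCoeff f = 0) {a : MvPowerSeries τ S} (ha : constantCoeff a = 0) :
    constantCoeff (subst ![a] f) = 0 :=
  constantCoeff_subst_eq_zero (hasSubst_of_constantCoeff_zero (Fin.forall_fin_one.2 ha))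
    (Fin.forall_fin_one.2 ha) hf

theorem hasSubst_pair {a b : MvPowerSeries τ S} (ha : constantCoeff a = 0)
    (hb : constantCoeff b = 0) : HasSubst ![a, b] :=
  hasSubst_of_constantCoeff_zero (Fin.forall_fin_two.2 ⟨ha, hb⟩)

theorem subst_subst_single {b : σ → MvPowerSeries τ S} (hb : HasSubst b)
    {u : MvPowerSeries σ S} (hu : constantCoeff u = 0) (f : MvPowerSeries (Fin 1) S) :
    subst b (subst ![u] f) = subst ![subst b u] f := by
  rw [subst_comp_subst_apply (hasSubst_of_constantCoeff_zero (Fin.forall_fin_one.2 hu)) hb]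
  congr 1
  funext i
  fin_cases i
  rfl

theorem subst_subst_pair {b : σ → MvPowerSeries τ S} (hb : HasSubst b)
    {u v : MvPowerSeries σ S} (hu : constantCoeff u = 0) (hv : constantCoeff v = 0)
    (f : MvPowerSeries (Fin 2) S) :
    subst b (subst ![u, v] f) = subst ![subst b u, subst b v] f := by
  rw [subst_comp_subst_apply (hasSubst_pair hu hv) hb]
  congr 1
  funext i
  fin_cases i <;> rfl

theorem subst_X_zero_X_one (f : MvPowerSeries (Fin 2) S) : subst ![X 0, X 1] f = f := by
  have : ![(X 0 : MvPowerSeries (Fin 2) S), X 1] = X := by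
    funext i
    fin_cases i <;> rfl
  rw [this, subst_self, id]

theorem X_zero_dvd_sub_subst_zero_X_one (f : MvPowerSeries (Fin 2) S) :
    X 0 ∣ f - subst ![0, X 1] f := by
  have : ![(0 : MvPowerSeries (Fin 2) S), X 1] = (![0, 1] : Fin 2 → S) • X := by
    funext i
    fin_cases i <;> simp
  rw [this, ← rescale_eq_subst, X_dvd_iff]
  intro m hm
  rw [map_sub, coeff_rescale, Finsupp.prod_fintype _ _ (by simp), Fin.prod_univ_two, hm]
  simp

theorem X_mul_left_cancel {i : σ} {f g : MvPowerSeries σ S} (h : X i * f = X i * g) : f = g :=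
  have hX : (X i : MvPowerSeries σ S) ∈ nonZeroDivisors (MvPowerSeries σ S) :=
    X_mem_nonzeroDivisors
  (mul_cancel_left_mem_nonZeroDivisors hX).1 h

end MvPowerSeries

theorem msubst_eq_subst {k n : ℕ} {a : Fin k → MvPowerSeries (Fin n) S}
    (ha : ∀ j, constantCoeff (a j) = 0) (f : MvPowerSeries (Fin k) S) :
    msubst a f = subst a f := by
  ext m
  rw [coeff_subst (hasSubst_of_constantCoeff_zero ha),
    finsum_eq_sum_of_support_subset _
      (s := Finset.Iic (equivFunOnFinite.symm fun _ : Fin k => m.degree)) ?_]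
  · exact Finset.sum_congr rfl fun d _ => by rw [smul_eq_mul, Finsupp.prod_fintype _ _ (by simp)]
  · intro d hd
    by_contra hdm
    simp only [Finset.coe_Iic, Set.mem_Iic, Finsupp.le_def, not_forall, not_le] at hdm
    obtain ⟨j, hj⟩ := hdm
    exact hd (by
      dsimp only
      rw [coeff_prod_pow_eq_zero_of_degree_lt ha (hj.trans_le (le_degree j d)), smul_zero])

theorem msubst_pair_eq_subst {n : ℕ} {a b : MvPowerSeries (Fin n) S}
    (ha : constantCoeff a = 0) (hb : constantCoeff b = 0) (f : MvPowerSeries (Fin 2) S) :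
    msubst ![a, b] f = subst ![a, b] f :=
  msubst_eq_subst (Fin.forall_fin_two.2 ⟨ha, hb⟩) f

theorem fsub_eq_subst {F : MvPowerSeries (Fin 2) S} {ι : MvPowerSeries (Fin 1) S}
    (hι : constantCoeff ι = 0) {n : ℕ} {a b : MvPowerSeries (Fin n) S}
    (ha : constantCoeff a = 0) (hb : constantCoeff b = 0) :
    fsub F ι a b = subst ![a, subst ![b] ι] F := by
  rw [fsub, fneg, msubst_eq_subst (Fin.forall_fin_one.2 hb),
    msubst_pair_eq_subst ha (constantCoeff_subst_single_eq_zero hι hb)]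

namespace IsFormalGroupLaw

variable {F : MvPowerSeries (Fin 2) S} {τ : Type*} {a b c : MvPowerSeries τ S}

theorem constantCoeff_subst_pair (hF : IsFormalGroupLaw F) (ha : constantCoeff a = 0)
    (hb : constantCoeff b = 0) : constantCoeff (subst ![a, b] F) = 0 :=
  constantCoeff_subst_eq_zero (hasSubst_pair ha hb) (Fin.forall_fin_two.2 ⟨ha, hb⟩) hF.1

theorem subst_X_one_X_zero (hF : IsFormalGroupLaw F) :
    subst ![(X 1 : MvPowerSeries (Fin 2) S), X 0] F = F := by
  rw [← msubst_pair_eq_subst (constantCoeff_X 1) (constantCoeff_X 0)]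
  exact hF.2.1

theorem subst_X_zero_zero (hF : IsFormalGroupLaw F) :
    subst ![(X 0 : MvPowerSeries (Fin 2) S), 0] F = X 0 := by
  rw [← msubst_pair_eq_subst (constantCoeff_X 0) (map_zero _)]
  exact hF.2.2.1

theorem subst_assoc_X (hF : IsFormalGroupLaw F) :
    subst ![subst ![(X 0 : MvPowerSeries (Fin 3) S), X 1] F, X 2] F =
      subst ![X 0, subst ![(X 1 : MvPowerSeries (Fin 3) S), X 2] F] F := by
  have h := hF.2.2.2
  rwa [msubst_pair_eq_subst (constantCoeff_X 0) (constantCoeff_X 1),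
    msubst_pair_eq_subst (constantCoeff_X 1) (constantCoeff_X 2),
    msubst_pair_eq_subst (hF.constantCoeff_subst_pair (constantCoeff_X 0) (constantCoeff_X 1))
      (constantCoeff_X 2),
    msubst_pair_eq_subst (constantCoeff_X 0)
      (hF.constantCoeff_subst_pair (constantCoeff_X 1) (constantCoeff_X 2))] at h

theorem subst_comm (hF : IsFormalGroupLaw F) (ha : constantCoeff a = 0)
    (hb : constantCoeff b = 0) : subst ![a, b] F = subst ![b, a] F := by
  conv_lhs => rw [← hF.subst_X_one_X_zero]
  rw [subst_subst_pair (hasSubst_pair ha hb) (constantCoeff_X 1) (constantCoeff_X 0)]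
  simp [subst_X (hasSubst_pair ha hb)]

theorem subst_zero_right (hF : IsFormalGroupLaw F) (ha : constantCoeff a = 0) :
    subst ![a, 0] F = a := by
  have h := congrArg (subst ![a, 0]) hF.subst_X_zero_zero
  rw [subst_subst_pair (hasSubst_pair ha (map_zero _)) (constantCoeff_X 0) (map_zero _)] at h
  simpa [subst_X (hasSubst_pair ha (map_zero _))] using h

theorem subst_zero_left (hF : IsFormalGroupLaw F) (hb : constantCoeff b = 0) :
    subst ![0, b] F = b := by
  rw [hF.subst_comm (map_zero _) hb, hF.subst_zero_right hb]

theorem subst_assoc (hF : IsFormalGroupLaw F) (ha : constantCoeff a = 0)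
    (hb : constantCoeff b = 0) (hc : constantCoeff c = 0) :
    subst ![subst ![a, b] F, c] F = subst ![a, subst ![b, c] F] F := by
  have habc : HasSubst ![a, b, c] :=
    hasSubst_of_constantCoeff_zero (by simp [Fin.forall_fin_succ, ha, hb, hc])
  have h := congrArg (subst ![a, b, c]) hF.subst_assoc_X
  rw [subst_subst_pair habc (hF.constantCoeff_subst_pair (constantCoeff_X 0) (constantCoeff_X 1))
      (constantCoeff_X 2),
    subst_subst_pair habc (constantCoeff_X 0)
      (hF.constantCoeff_subst_pair (constantCoeff_X 1) (constantCoeff_X 2)),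
    subst_subst_pair habc (constantCoeff_X 0) (constantCoeff_X 1),
    subst_subst_pair habc (constantCoeff_X 1) (constantCoeff_X 2)] at h
  simpa [subst_X habc] using h

end IsFormalGroupLaw

namespace IsFormalInverse

variable {F : MvPowerSeries (Fin 2) S} {ι : MvPowerSeries (Fin 1) S} {τ : Type*}
  {a b : MvPowerSeries τ S}

theorem subst_X_zero (hι : IsFormalInverse F ι) :
    subst ![(X 0 : MvPowerSeries (Fin 1) S), ι] F = 0 := by
  rw [← msubst_pair_eq_subst (constantCoeff_X 0) hι.1]
  exact hι.2

theorem subst_inv_right (hι : IsFormalInverse F ι) (ha : constantCoeff a = 0) :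
    subst ![a, subst ![a] ι] F = 0 := by
  have ha' : HasSubst ![a] := hasSubst_of_constantCoeff_zero (Fin.forall_fin_one.2 ha)
  have h := congrArg (subst ![a]) hι.subst_X_zero
  rwa [subst_subst_pair ha' (constantCoeff_X 0) hι.1, subst_X ha', subst_apply_zero] at h

theorem subst_inv_left (hF : IsFormalGroupLaw F) (hι : IsFormalInverse F ι)
    (ha : constantCoeff a = 0) : subst ![subst ![a] ι, a] F = 0 := by
  rw [hF.subst_comm (constantCoeff_subst_single_eq_zero hι.1 ha) ha, hι.subst_inv_right ha]

theorem subst_sub_add_cancel (hF : IsFormalGroupLaw F) (hι : IsFormalInverse F ι)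
    (ha : constantCoeff a = 0) (hb : constantCoeff b = 0) :
    subst ![subst ![a, subst ![b] ι] F, b] F = a := by
  rw [hF.subst_assoc ha (constantCoeff_subst_single_eq_zero hι.1 hb) hb,
    hι.subst_inv_left hF hb, hF.subst_zero_right ha]

theorem subst_add_sub_cancel (hF : IsFormalGroupLaw F) (hι : IsFormalInverse F ι)
    (ha : constantCoeff a = 0) (hb : constantCoeff b = 0) :
    subst ![subst ![a, b] F, subst ![b] ι] F = a := by
  rw [hF.subst_assoc ha hb (constantCoeff_subst_single_eq_zero hι.1 hb),
    hι.subst_inv_right hb, hF.subst_zero_right ha]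

end IsFormalInverse

theorem IsFormalGroupLaw.exists_sub_X_one_eq_X_zero_mul_isUnit {F : MvPowerSeries (Fin 2) S}
    (hF : IsFormalGroupLaw F) : ∃ h, F - X 1 = X 0 * h ∧ IsUnit h := by
  have h0X : HasSubst ![(X 0 : MvPowerSeries (Fin 2) S), 0] :=
    hasSubst_pair (constantCoeff_X 0) (map_zero _)
  obtain ⟨h, hh⟩ : X 0 ∣ F - X 1 := by
    simpa only [hF.subst_zero_left (constantCoeff_X (R := S) (1 : Fin 2))] using
      X_zero_dvd_sub_subst_zero_X_one F
  refine ⟨h, hh, isUnit_iff_constantCoeff.2 ?_⟩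
  have hx : X 0 * subst ![(X 0 : MvPowerSeries (Fin 2) S), 0] h = X 0 * 1 := by
    have := congrArg (subst ![(X 0 : MvPowerSeries (Fin 2) S), 0]) hh
    simpa [subst_sub h0X, subst_mul h0X, subst_X h0X, hF.subst_X_zero_zero] using this.symm
  rw [← constantCoeff_subst_of_constantCoeff_eq_zero h0X
    (Fin.forall_fin_two.2 ⟨constantCoeff_X 0, map_zero _⟩), X_mul_left_cancel hx, map_one]
  exact isUnit_one

theorem IsFormalInverse.X_zero_sub_X_one_eq_mul_iff {F : MvPowerSeries (Fin 2) S}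
    {ι : MvPowerSeries (Fin 1) S} (hF : IsFormalGroupLaw F) (hι : IsFormalInverse F ι)
    {h : MvPowerSeries (Fin 2) S} (hh : F - X 1 = X 0 * h) (g : MvPowerSeries (Fin 2) S) :
    X 0 - X 1 = subst ![X 0, subst ![X 1] ι] F * g ↔
      g = subst ![subst ![X 0, subst ![X 1] ι] F, X 1] h := by
  set D := subst ![(X 0 : MvPowerSeries (Fin 2) S), subst ![X 1] ι] F with hD
  have hν := constantCoeff_subst_single_eq_zero hι.1 (constantCoeff_X (R := S) (1 : Fin 2))
  have hφ : HasSubst ![F, X 1] := hasSubst_pair hF.1 (constantCoeff_X 1)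
  have hψ : HasSubst ![D, X 1] :=
    hasSubst_pair (hF.constantCoeff_subst_pair (constantCoeff_X 0) hν) (constantCoeff_X 1)
  have hψF : subst ![D, X 1] F = X 0 :=
    hι.subst_sub_add_cancel hF (constantCoeff_X 0) (constantCoeff_X 1)
  have hφD : subst ![F, X 1] D = X 0 := by
    rw [hD, subst_subst_pair hφ (constantCoeff_X 0) hν,
      subst_subst_single hφ (constantCoeff_X 1)]
    simpa [subst_X hφ, subst_X_zero_X_one] using
      hι.subst_add_sub_cancel hF (constantCoeff_X (R := S) (0 : Fin 2)) (constantCoeff_X 1)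
  have hψφ : ∀ f, subst ![D, X 1] (subst ![F, X 1] f) = f := fun f => by
    rw [subst_subst_pair hψ hF.1 (constantCoeff_X 1), hψF, subst_X hψ]
    exact subst_X_zero_X_one f
  constructor
  · intro hg
    have := congrArg (subst ![F, X 1]) hg
    rw [subst_sub hφ, subst_X hφ, subst_X hφ, subst_mul hφ, hφD] at this
    simp only [Matrix.cons_val_zero, Matrix.cons_val_one, hh] at this
    rw [← hψφ g, ← X_mul_left_cancel this]
  · rintro rfl
    have := congrArg (subst ![D, X 1]) hh
    rwa [subst_sub hψ, subst_X hψ, subst_mul hψ, subst_X hψ, hψF] at this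

/-- there is a unique power series `g(x,y) ∈ S[[x,y]]` with
`x − y = (x −_F y)·g(x,y)`, and this `g` is invertible. -/
theorem exists_unique_g_and_isUnit
    (F : MvPowerSeries (Fin 2) S) (hF : IsFormalGroupLaw F)
    (ι : MvPowerSeries (Fin 1) S) (hι : IsFormalInverse F ι) :
    (∃! g : MvPowerSeries (Fin 2) S,
        (X 0 : MvPowerSeries (Fin 2) S) - X 1 = fsub F ι (X 0) (X 1) * g) ∧
    (∀ g : MvPowerSeries (Fin 2) S,
        (X 0 : MvPowerSeries (Fin 2) S) - X 1 = fsub F ι (X 0) (X 1) * g → IsUnit g) := by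
  obtain ⟨h, hh, hu⟩ := hF.exists_sub_X_one_eq_X_zero_mul_isUnit
  have hD := hF.constantCoeff_subst_pair (constantCoeff_X (R := S) (0 : Fin 2))
    (constantCoeff_subst_single_eq_zero hι.1 (constantCoeff_X (R := S) (1 : Fin 2)))
  simp_rw [fsub_eq_subst hι.1 (constantCoeff_X 0) (constantCoeff_X 1),
    hι.X_zero_sub_X_one_eq_mul_iff hF hh]
  refine ⟨existsUnique_eq, fun g hg => ?_⟩
  rw [hg, ← substAlgHom_apply (hasSubst_pair hD (constantCoeff_X 1))]
  exact hu.map _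

end
end

section
/- Let S be a commutative ring, F a formal group law over S, n ≥ 2, and 1 ≤ i ≤ n−1. Then for every f ∈ R = S[[x_1,…,x_n]], the element f − s_i(f) is divisible in R both by x_i −_F x_{i+1} and by x_{i+1} −_F x_i. -/
/- Common setup: substitution of multivariate power series, formal group laws,
formal inverses, and the variable–swapping operation. -/

open MvPowerSeries Finsupp

noncomputable section

variable {S : Type*} [CommRing S]

/-
Write `D = x_i −_F x_j = F(x_i, ι(x_j))`. Renaming `x_i` to `x_j` is an `S`-algebra map
`R → R`; it kills `D`, which becomes `F(x_j, ι(x_j)) = 0`, and it kills `f − s_i f`, because it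
is invariant under `s_i`. A power series killed by this renaming is divisible by `x_i − x_j`,
and the quotient has constant coefficient equal to the coefficient of `x_i`. For `D` that
coefficient is the linear coefficient `1` of `F`, so `D` is `x_i − x_j` times a unit.
-/

lemma coeff_msubst {k n : ℕ} (a : Fin k → MvPowerSeries (Fin n) S)
    (F : MvPowerSeries (Fin k) S) (m : Fin n →₀ ℕ) :
    coeff m (msubst a F) = ∑ d ∈ Finset.Iic (equivFunOnFinite.symm fun _ : Fin k => m.degree),
      coeff d F * coeff m (∏ t, a t ^ d t) := rfl

lemma mem_Iic_equivFunOnFinite_symm_const {k : ℕ} {d : Fin k →₀ ℕ} {c : ℕ} :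
    d ∈ Finset.Iic (equivFunOnFinite.symm fun _ : Fin k => c) ↔ ∀ t, d t ≤ c := by
  simp [Finsupp.le_def]

lemma prod_X_pow_eq_monomial {σ : Type*} [Fintype σ] (d : σ →₀ ℕ) :
    ∏ t, (X t : MvPowerSeries σ S) ^ d t = monomial d 1 := by
  rw [monomial_one_eq, Finsupp.prod_pow]

lemma msubst_X {k : ℕ} (F : MvPowerSeries (Fin k) S) : msubst X F = F := by
  classical
  ext m
  rw [coeff_msubst, Finset.sum_eq_single_of_mem m
    (mem_Iic_equivFunOnFinite_symm_const.mpr fun t => le_degree t m)]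
  · rw [prod_X_pow_eq_monomial, coeff_monomial_same, mul_one]
  · intro d _ hd
    rw [prod_X_pow_eq_monomial, coeff_monomial_ne (Ne.symm hd), mul_zero]

lemma rename_msubst {k n n' : ℕ} (f : Fin n → Fin n') (a : Fin k → MvPowerSeries (Fin n) S)
    (F : MvPowerSeries (Fin k) S) :
    rename f (msubst a F) = msubst (fun t => rename f (a t)) F := by
  ext m
  rw [coeff_rename, coeff_msubst]
  simp_rw [← map_pow, ← map_prod, coeff_rename, Finset.mul_sum]
  rw [Finset.sum_comm]
  refine Finset.sum_congr rfl fun u hu => ?_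
  rw [coeff_msubst]
  simp only [Set.Finite.mem_toFinset, Set.mem_preimage, Set.mem_singleton_iff] at hu
  rw [← hu, degree_mapDomain]

lemma degree_le_order_prod_pow {k n : ℕ} {a : Fin k → MvPowerSeries (Fin n) S}
    (ha : ∀ t, constantCoeff (a t) = 0) (d : Fin k →₀ ℕ) :
    (d.degree : ℕ∞) ≤ (∏ t, a t ^ d t).order := by
  rw [degree_eq_sum, Nat.cast_sum]
  exact (Finset.sum_le_sum fun t _ => le_order_pow_of_constantCoeff_eq_zero _ (ha t)).trans
    (le_order_prod _ _)

lemma coeff_single_one_msubst {k n : ℕ} {a : Fin k → MvPowerSeries (Fin n) S}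
    (ha : ∀ t, constantCoeff (a t) = 0) (F : MvPowerSeries (Fin k) S) (i : Fin n) :
    coeff (single i 1) (msubst a F) = ∑ t, coeff (single t 1) F * coeff (single i 1) (a t) := by
  classical
  have hsub : Finset.univ.image (fun t => single t 1) ⊆
      Finset.Iic (equivFunOnFinite.symm fun _ : Fin k => (single i 1).degree) := by
    intro d hd
    obtain ⟨t, -, rfl⟩ := Finset.mem_image.mp hd
    rw [degree_single, mem_Iic_equivFunOnFinite_symm_const]
    intro u
    rw [single_apply]
    split_ifs <;> omega
  rw [coeff_msubst, ← Finset.sum_subset hsub, Finset.sum_image fun _ _ _ _ h =>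
    single_left_injective one_ne_zero h]
  · refine Finset.sum_congr rfl fun t _ => ?_
    dsimp only
    rw [← Finsupp.prod_pow, prod_single_index (h := fun u b => a u ^ b) (pow_zero _), pow_one]
  · intro d _ hd
    have hd1 : d.degree ≠ 1 := fun h => by
      obtain ⟨t, rfl⟩ := (sum_eq_one_iff d).mp h
      exact hd (Finset.mem_image_of_mem _ (Finset.mem_univ t))
    rcases Nat.lt_or_ge d.degree 2 with hlt | hge
    · obtain rfl : d = 0 := (degree_eq_zero_iff d).mp (by omega)
      simp [coeff_one]
    · refine mul_eq_zero_of_right _ (coeff_of_lt_order ?_)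
      refine lt_of_lt_of_le ?_ (degree_le_order_prod_pow ha d)
      rw [degree_single]
      exact_mod_cast hge

lemma fneg_X (ι : MvPowerSeries (Fin 1) S) {n : ℕ} (j : Fin n) :
    fneg ι (X j) = rename (fun _ => j) ι := by
  conv_rhs => rw [← msubst_X ι, rename_msubst]
  unfold fneg
  congr 1
  ext t : 1
  rw [Fin.fin_one_eq_zero t, rename_X]
  rfl

lemma coeff_single_one_X_sub_X_mul {σ : Type*} {i j : σ} (hij : i ≠ j)
    (q : MvPowerSeries σ S) : coeff (single i 1) ((X i - X j) * q) = constantCoeff q := by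
  rw [sub_mul, map_sub, X_def, X_def, coeff_monomial_mul, coeff_monomial_mul, if_pos le_rfl,
    if_neg (by simp [single_le_iff, hij]), tsub_self, one_mul, sub_zero,
    coeff_zero_eq_constantCoeff_apply]

section Diagonal

variable {σ : Type*} [DecidableEq σ] {i j : σ}

lemma X_sub_X_dvd_of_sum_coeff_eq_zero (hij : i ≠ j) {h : MvPowerSeries σ S}
    (H : ∀ m : σ →₀ ℕ, m i = 0 →
      ∑ s ∈ Finset.range (m j + 1), coeff (m - single j s + single i s) h = 0) :
    X i - X j ∣ h := by
  -- `T m` sums the coefficients of `h` along the line `m + s • (e_i - e_j)`; the quotient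
  -- has coefficients `T (u + e_i)`.
  let T : (σ →₀ ℕ) → S :=
    fun m => ∑ s ∈ Finset.range (m j + 1), coeff (m - single j s + single i s) h
  have peel : ∀ m, T m =
      coeff m h + if single j 1 ≤ m then T (m - single j 1 + single i 1) else 0 := by
    intro m
    simp only [T]
    rw [Finset.sum_range_succ', single_zero, single_zero, tsub_zero, add_zero, add_comm]
    congr 1
    split_ifs with hm
    · have hmj : (m - single j 1 + single i 1 : σ →₀ ℕ) j = m j - 1 := by
        simp [hij]
      rw [single_le_iff] at hm
      rw [hmj, Nat.sub_add_cancel hm]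
      refine Finset.sum_congr rfl fun s _ => congrArg (coeff · h) ?_
      ext k
      rcases eq_or_ne k j with rfl | hkj
      · simp [hij.symm]
        omega
      · simp [single_apply, hkj.symm]
        split_ifs <;> omega
    · rw [single_le_iff, not_le, Nat.lt_one_iff] at hm
      rw [hm, Finset.range_zero, Finset.sum_empty]
  let q : MvPowerSeries σ S := fun u => T (u + single i 1)
  refine ⟨q, ?_⟩
  ext m
  rw [sub_mul, map_sub, X_def, X_def, coeff_monomial_mul, coeff_monomial_mul, one_mul, one_mul]
  have hXi : (if single i 1 ≤ m then T (m - single i 1 + single i 1) else 0) = T m := by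
    split_ifs with hle
    · rw [tsub_add_cancel_of_le hle]
    · rw [single_le_iff, not_le, Nat.lt_one_iff] at hle
      exact (H m hle).symm
  change coeff m h = (if single i 1 ≤ m then T (m - single i 1 + single i 1) else 0) -
    (if single j 1 ≤ m then T (m - single j 1 + single i 1) else 0)
  rw [hXi, peel m]
  ring

lemma mapDomain_update_id (u : σ →₀ ℕ) :
    mapDomain (Function.update id i j) u = u.erase i + single j (u i) := by
  conv_lhs => rw [← erase_add_single i u]
  rw [mapDomain_add, mapDomain_single, Function.update_self,
    mapDomain_congr (g := id) fun k hk => Function.update_of_ne (by simp_all) _ _, mapDomain_id]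

lemma update_id_comp_swap :
    Function.update id i j ∘ Equiv.swap i j = Function.update id i j := by
  ext1 k
  by_cases hki : k = i
  · subst hki
    simp [Function.update_apply]
  by_cases hkj : k = j
  · subst hkj; simp [hki]
  · simp [Equiv.swap_apply_of_ne_of_ne hki hkj]

variable [Finite σ]

lemma coeff_rename_update_id (hij : i ≠ j) (h : MvPowerSeries σ S) {m : σ →₀ ℕ}
    (hm : m i = 0) :
    coeff m (rename (Function.update id i j) h) =
      ∑ s ∈ Finset.range (m j + 1), coeff (m - single j s + single i s) h := by
  have hφ : ∀ s, (m - single j s + single i s : σ →₀ ℕ) i = s := by simp [hm, hij]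
  set P := (Filter.TendstoCofinite.finite_preimage_singleton
    (mapDomain (Function.update id i j)) m).toFinset
  have hP : ∀ u, u ∈ P ↔ u.erase i + single j (u i) = m := by
    simp [P, mapDomain_update_id]
  have hinv : ∀ u ∈ P, m - single j (u i) + single i (u i) = u := by
    intro u hu
    rw [hP] at hu
    subst hu
    ext k
    rcases eq_or_ne k i with rfl | hki
    · simp
    · simp [hki]
  rw [coeff_rename]
  refine Finset.sum_nbij' (fun u => u i) (fun s => m - single j s + single i s) ?_ ?_ hinv
    (fun s _ => hφ s) (fun u hu => by rw [hinv u hu])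
  · intro u hu
    rw [hP] at hu
    subst hu
    simp
  · intro s hs
    rw [Finset.mem_range] at hs
    rw [hP, hφ]
    ext k
    rcases eq_or_ne k i with rfl | hki
    · simp [hij, hm]
    rcases eq_or_ne k j with rfl | hkj
    · simp [hki]
      omega
    · simp [hki, hkj]

lemma X_sub_X_dvd_of_rename_update_id_eq_zero (hij : i ≠ j) {h : MvPowerSeries σ S}
    (H : rename (Function.update id i j) h = 0) : X i - X j ∣ h :=
  X_sub_X_dvd_of_sum_coeff_eq_zero hij fun m hm => by
    rw [← coeff_rename_update_id hij h hm, H, map_zero]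

end Diagonal

lemma swapVars_eq_rename {n : ℕ} (i j : Fin n) (f : MvPowerSeries (Fin n) S) :
    swapVars i j f = rename (Equiv.swap i j) f := by
  ext m
  have hm : embDomain (Equiv.swap i j).toEmbedding (equivMapDomain (Equiv.swap i j) m) = m := by
    rw [embDomain_eq_mapDomain, equivMapDomain_eq_mapDomain, ← mapDomain_comp,
      Equiv.coe_toEmbedding, ← Equiv.coe_trans, Equiv.swap_swap, Equiv.coe_refl, mapDomain_id]
  have h := coeff_embDomain_rename (R := S) (Equiv.swap i j).toEmbedding f
    (equivMapDomain (Equiv.swap i j) m)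
  rw [hm] at h
  exact h.symm

lemma swapVars_comm {n : ℕ} (i j : Fin n) : swapVars (S := S) i j = swapVars j i := by
  ext1 f
  rw [swapVars_eq_rename, swapVars_eq_rename, Equiv.swap_comm]

lemma rename_update_swapVars {n : ℕ} {i j : Fin n} (f : MvPowerSeries (Fin n) S) :
    rename (Function.update id i j) (swapVars i j f) = rename (Function.update id i j) f := by
  rw [swapVars_eq_rename, rename_rename]
  simp only [update_id_comp_swap]

lemma X_sub_X_dvd_sub_swapVars {n : ℕ} {i j : Fin n} (hij : i ≠ j)
    (f : MvPowerSeries (Fin n) S) :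
    X i - X j ∣ f - swapVars i j f :=
  X_sub_X_dvd_of_rename_update_id_eq_zero hij (by rw [map_sub, rename_update_swapVars, sub_self])

lemma IsFormalGroupLaw.coeff_single_zero_one {F : MvPowerSeries (Fin 2) S}
    (hF : IsFormalGroupLaw F) : coeff (single 0 1) F = 1 := by
  have h := congrArg (coeff (single 0 1)) hF.2.2.1
  rw [coeff_single_one_msubst (a := ![_, _])
    (Fin.forall_fin_two.mpr ⟨constantCoeff_X _, map_zero _⟩), Fin.sum_univ_two, coeff_X,
    if_pos rfl] at h
  simpa using h

lemma coeff_single_one_fsub_X (F : MvPowerSeries (Fin 2) S) {ι : MvPowerSeries (Fin 1) S}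
    (hι : constantCoeff ι = 0) {n : ℕ} {i j : Fin n} (hij : i ≠ j) :
    coeff (single i 1) (fsub F ι (X i) (X j)) = coeff (single 0 1) F := by
  have hι' : coeff (single i 1) (rename (fun _ => j) ι) = 0 :=
    coeff_rename_eq_zero _ _ fun ⟨u, hu⟩ => by
      have hi : i ∉ Set.range fun _ : Fin 1 => j := by simpa using hij
      simpa [mapDomain_of_notMem_range u i hi] using congrArg (· i) hu
  unfold fsub
  rw [fneg_X, coeff_single_one_msubst (a := ![_, _]) (Fin.forall_fin_two.mpr ⟨constantCoeff_X _,
    by simpa using hι⟩), Fin.sum_univ_two]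
  simp [hι']

lemma rename_update_fsub_X {F : MvPowerSeries (Fin 2) S} {ι : MvPowerSeries (Fin 1) S}
    (hι : IsFormalInverse F ι) {n : ℕ} {i j : Fin n} (hij : i ≠ j) :
    rename (Function.update id i j) (fsub F ι (X i) (X j)) = 0 := by
  have hj : Function.update id i j j = j := Function.update_of_ne (Ne.symm hij) _ _
  have h : (fun t => rename (Function.update id i j) (![X i, rename (fun _ => j) ι] t)) =
      fun t => rename (fun _ => j) (![X 0, ι] t) := by
    ext1 t
    fin_cases t
    · simp
    · simp [rename_rename, Function.comp_def, hj]
  unfold fsub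
  rw [fneg_X, rename_msubst, h, ← rename_msubst, hι.2, map_zero]

lemma associated_fsub_X_X_sub_X {F : MvPowerSeries (Fin 2) S} (hF : IsFormalGroupLaw F)
    {ι : MvPowerSeries (Fin 1) S} (hι : IsFormalInverse F ι) {n : ℕ} {i j : Fin n}
    (hij : i ≠ j) : Associated (fsub F ι (X i) (X j)) (X i - X j) := by
  obtain ⟨q, hq⟩ := X_sub_X_dvd_of_rename_update_id_eq_zero hij (rename_update_fsub_X hι hij)
  have hq1 : constantCoeff q = 1 := by
    rw [← coeff_single_one_X_sub_X_mul hij, ← hq, coeff_single_one_fsub_X F hι.1 hij,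
      hF.coeff_single_zero_one]
  have hunit : IsUnit q := isUnit_iff_constantCoeff.mpr (hq1 ▸ isUnit_one)
  exact Associated.symm ⟨hunit.unit, hq.symm⟩

theorem fsub_dvd_sub_swapVars_general
    (F : MvPowerSeries (Fin 2) S) (hF : IsFormalGroupLaw F)
    (ι : MvPowerSeries (Fin 1) S) (hι : IsFormalInverse F ι)
    {n : ℕ} (i j : Fin n)
    (f : MvPowerSeries (Fin n) S) :
    fsub F ι (X i : MvPowerSeries (Fin n) S) (X j) ∣ (f - swapVars i j f) ∧
    fsub F ι (X j : MvPowerSeries (Fin n) S) (X i) ∣ (f - swapVars i j f) := by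
  rcases eq_or_ne i j with rfl | hij
  · simp [swapVars_eq_rename]
  refine ⟨(associated_fsub_X_X_sub_X hF hι hij).dvd_iff_dvd_left.mpr
    (X_sub_X_dvd_sub_swapVars hij f), ?_⟩
  rw [swapVars_comm]
  exact (associated_fsub_X_X_sub_X hF hι hij.symm).dvd_iff_dvd_left.mpr
    (X_sub_X_dvd_sub_swapVars hij.symm f)

/-- for every `f ∈ R = S[[x_1,…,x_n]]`, the element `f − s_i(f)` is divisible
both by `x_i −_F x_{i+1}` and by `x_{i+1} −_F x_i`. -/
theorem fsub_dvd_sub_swapVars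
    (F : MvPowerSeries (Fin 2) S) (hF : IsFormalGroupLaw F)
    (ι : MvPowerSeries (Fin 1) S) (hι : IsFormalInverse F ι)
    {n : ℕ} (i j : Fin n) (hij : (i : ℕ) + 1 = (j : ℕ))
    (f : MvPowerSeries (Fin n) S) :
    fsub F ι (X i : MvPowerSeries (Fin n) S) (X j) ∣ (f - swapVars i j f) ∧
    fsub F ι (X j : MvPowerSeries (Fin n) S) (X i) ∣ (f - swapVars i j f) :=
  fsub_dvd_sub_swapVars_general F hF ι hι i j f

end
end

section
/- Let S be a commutative ring, n ≥ 2, and 1 ≤ i ≤ n−1. The S-algebra homomorphism Φ : S[[y_1,…,y_n]] → S[[x_1,…,x_n]] determined by substituting y_j ↦ x_j for j ∉ {i, i+1}, y_i ↦ x_i + x_{i+1}, and y_{i+1} ↦ x_i·x_{i+1} is injective, and its image is exactly the fixed subalgebra R^{s_i} of power series invariant under interchanging x_i and x_{i+1}. That is, every s_i-invariant power series is, in a unique way, a power series in x_1,…,x_{i−1}, x_i + x_{i+1}, x_i·x_{i+1}, x_{i+2},…,x_n. -/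
/- Common setup: substitution of multivariate power series, formal group laws,
formal inverses, and the variable–swapping operation. -/

open MvPowerSeries Finsupp

noncomputable section

variable {S : Type*} [CommRing S]

/-!
Write `Φ` for the substitution and `d(m, q)` (`contribExp`) for the exponent with `y_j`-entry `q`,
`y_i`-entry `m_i + m_j - 2q` and entry `m_l` elsewhere. Expanding
`Φ(y^d) = (x_i + x_j)^{d_i} (x_i x_j)^{d_j} ∏ x_l^{d_l}` gives
`[x^m] Φ F = ∑_{q ≤ min(m_i, m_j)} C(m_i + m_j - 2q, m_i - q) · [y^{d(m, q)}] F`,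
which is symmetric in `m_i, m_j`, so `Φ` lands in the invariants. For `m_j ≤ m_i` the term
`q = m_j` has coefficient `1`, so the equations `[x^m] Φ F = [x^m] f` with `m_j ≤ m_i` form a
unitriangular system in the `y_j`-exponent, with exactly one solution `F`, found by recursion on
that exponent. Uniqueness gives injectivity; an invariant `f` is determined by its coefficients
with `m_j ≤ m_i`, so for invariant `f` the solution satisfies `Φ F = f`.
-/

theorem MvPowerSeries.X_add_X_pow {σ R : Type*} [CommSemiring R] (a b : σ) (p : ℕ) :
    (X a + X b : MvPowerSeries σ R) ^ p
      = ∑ k ∈ Finset.range (p + 1),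
          monomial (single a k + single b (p - k)) (p.choose k : R) := by
  rw [add_pow]
  refine Finset.sum_congr rfl fun k _ => ?_
  rw [X_pow_eq, X_pow_eq, monomial_mul_monomial, ← map_natCast (C (σ := σ) (R := R)),
    ← monomial_zero_eq_C_apply, monomial_mul_monomial, add_zero, one_mul, one_mul]

theorem Finsupp.ext_iff_apply_pair {α M : Type*} [Zero M] (a b : α) {f g : α →₀ M} :
    f = g ↔ f a = g a ∧ f b = g b ∧ ∀ x, x ≠ a → x ≠ b → f x = g x := by
  refine ⟨fun h => h ▸ ⟨rfl, rfl, fun _ _ _ => rfl⟩, fun ⟨ha, hb, h⟩ => ?_⟩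
  ext x
  by_cases hxa : x = a
  · exact hxa ▸ ha
  by_cases hxb : x = b
  · exact hxb ▸ hb
  exact h x hxa hxb

theorem Finsupp.apply_add_apply_le_sum {α : Type*} [Fintype α] {a b : α} (hab : a ≠ b)
    (f : α →₀ ℕ) : f a + f b ≤ f.sum fun _ e => e := by
  classical
  rw [Finsupp.sum_fintype _ _ fun _ => rfl, ← Finset.sum_pair hab]
  exact Finset.sum_le_sum_of_subset (Finset.subset_univ _)

namespace SymmSubst

variable {n : ℕ} {i j : Fin n}

variable (i j) in
def substFamily : Fin n → MvPowerSeries (Fin n) S := fun l =>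
  if l = i then X i + X j else if l = j then X i * X j else X l

variable (i j) in
def contribExp (m : Fin n →₀ ℕ) (q : ℕ) : Fin n →₀ ℕ :=
  (m.update i (m i + m j - 2 * q)).update j q

variable (i j) in
def leadExp (d : Fin n →₀ ℕ) : Fin n →₀ ℕ := d.update i (d i + d j)

@[simp] theorem contribExp_apply_right (m : Fin n →₀ ℕ) (q : ℕ) :
    contribExp i j m q j = q := by
  simp [contribExp]

theorem contribExp_apply_left (hij : i ≠ j) (m : Fin n →₀ ℕ) (q : ℕ) :
    contribExp i j m q i = m i + m j - 2 * q := by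
  simp [contribExp, Finsupp.update_apply, hij]

theorem contribExp_apply_of_ne (m : Fin n →₀ ℕ) (q : ℕ) {l : Fin n} (hli : l ≠ i)
    (hlj : l ≠ j) :
    contribExp i j m q l = m l := by
  simp [contribExp, Finsupp.update_apply, hli, hlj]

theorem leadExp_apply_left (d : Fin n →₀ ℕ) : leadExp i j d i = d i + d j := by
  simp [leadExp]

theorem leadExp_apply_right (hij : i ≠ j) (d : Fin n →₀ ℕ) : leadExp i j d j = d j := by
  simp [leadExp, Finsupp.update_apply, Ne.symm hij]

theorem leadExp_apply_of_ne (d : Fin n →₀ ℕ) {l : Fin n} (hli : l ≠ i) :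
    leadExp i j d l = d l := by
  simp [leadExp, Finsupp.update_apply, hli]

theorem contribExp_leadExp (hij : i ≠ j) (d : Fin n →₀ ℕ) :
    contribExp i j (leadExp i j d) (d j) = d := by
  rw [Finsupp.ext_iff_apply_pair i j]
  refine ⟨?_, contribExp_apply_right _ _, fun l hli hlj => ?_⟩
  · rw [contribExp_apply_left hij, leadExp_apply_left, leadExp_apply_right hij]
    omega
  · rw [contribExp_apply_of_ne _ _ hli hlj, leadExp_apply_of_ne _ hli]

theorem leadExp_contribExp (hij : i ≠ j) {m : Fin n →₀ ℕ} (h : m j ≤ m i) :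
    leadExp i j (contribExp i j m (m j)) = m := by
  rw [Finsupp.ext_iff_apply_pair i j]
  refine ⟨?_, ?_, fun l hli hlj => ?_⟩
  · rw [leadExp_apply_left, contribExp_apply_left hij, contribExp_apply_right]
    omega
  · rw [leadExp_apply_right hij, contribExp_apply_right]
  · rw [leadExp_apply_of_ne _ hli, contribExp_apply_of_ne _ _ hli hlj]

theorem contribExp_swap (m : Fin n →₀ ℕ) (q : ℕ) :
    contribExp i j (equivMapDomain (Equiv.swap i j) m) q = contribExp i j m q := by
  ext l
  simp only [contribExp, Finsupp.update_apply, equivMapDomain_apply, Equiv.symm_swap,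
    Equiv.swap_apply_def]
  split_ifs <;> simp_all [Nat.add_comm]

theorem contribExp_mem_Iic (hij : i ≠ j) {m : Fin n →₀ ℕ} {q : ℕ} (hq : q ≤ m j) :
    contribExp i j m q ∈ Finset.Iic (equivFunOnFinite.symm fun _ => m.sum fun _ e => e) := by
  have hsum := Finsupp.apply_add_apply_le_sum hij m
  rw [Finset.mem_Iic, Finsupp.le_def]
  intro l
  simp only [coe_equivFunOnFinite_symm]
  by_cases hli : l = i
  · subst hli; rw [contribExp_apply_left hij]; omega
  by_cases hlj : l = j
  · subst hlj; rw [contribExp_apply_right]; omega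
  · rw [contribExp_apply_of_ne m q hli hlj, Finsupp.sum_fintype _ _ fun _ => rfl]
    exact Finset.single_le_sum (fun _ _ => Nat.zero_le _) (Finset.mem_univ l)

theorem prod_pow_substFamily (hij : i ≠ j) (d : Fin n →₀ ℕ) :
    ∏ l, substFamily i j l ^ d l
      = (X i + X j : MvPowerSeries (Fin n) S) ^ d i * monomial (d.update i (d j)) 1 := by
  have hj : j ∈ Finset.univ.erase i := by simp [Ne.symm hij]
  rw [monomial_one_eq, Finsupp.prod_fintype _ _ fun _ => pow_zero _,
    ← Finset.mul_prod_erase _ _ (Finset.mem_univ i), ← Finset.mul_prod_erase _ _ hj,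
    ← Finset.mul_prod_erase _ _ (Finset.mem_univ i), ← Finset.mul_prod_erase _ _ hj]
  have hrest : ∏ l ∈ (Finset.univ.erase i).erase j, substFamily i j l ^ d l
      = ∏ l ∈ (Finset.univ.erase i).erase j,
          (X l : MvPowerSeries (Fin n) S) ^ d.update i (d j) l := by
    refine Finset.prod_congr rfl fun l hl => ?_
    obtain ⟨hlj, hli, -⟩ := Finset.mem_erase.mp hl |>.imp_right Finset.mem_erase.mp
    simp [substFamily, Finsupp.update_apply, hli, hlj]
  rw [hrest]
  simp only [substFamily, ↓reduceIte, Ne.symm hij, Finsupp.update_apply, pow_ite]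
  ring

theorem coeff_prod_pow_substFamily (hij : i ≠ j) (d m : Fin n →₀ ℕ) :
    coeff m (∏ l, substFamily i j l ^ d l : MvPowerSeries (Fin n) S)
      = if d = contribExp i j m (d j) ∧ d j ≤ m i ∧ d j ≤ m j
        then ((m i + m j - 2 * d j).choose (m i - d j) : S) else 0 := by
  have hmatch : ∀ k ≤ d i, m = single i k + single j (d i - k) + d.update i (d j) ↔
      (d = contribExp i j m (d j) ∧ d j ≤ m i ∧ d j ≤ m j) ∧ k = m i - d j := by
    intro k hk
    simp only [Finsupp.ext_iff_apply_pair i j, Finsupp.add_apply, Finsupp.update_apply,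
      Finsupp.single_apply, contribExp_apply_left hij, contribExp_apply_right, if_neg hij,
      if_neg (Ne.symm hij), ite_true, true_and]
    constructor
    · rintro ⟨hi, hj, hrest⟩
      refine ⟨⟨⟨by omega, fun l hli hlj => ?_⟩, by omega, by omega⟩, by omega⟩
      simp [hrest l hli hlj, contribExp_apply_of_ne m _ hli hlj, Ne.symm hli, Ne.symm hlj, hli]
    · rintro ⟨⟨⟨hi, hrest⟩, h1, h2⟩, rfl⟩
      refine ⟨by omega, by omega, fun l hli hlj => ?_⟩
      simp [hrest l hli hlj, contribExp_apply_of_ne m _ hli hlj, Ne.symm hli, Ne.symm hlj, hli]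
  rw [prod_pow_substFamily hij, X_add_X_pow, Finset.sum_mul, map_sum]
  simp only [monomial_mul_monomial, mul_one, coeff_monomial]
  split_ifs with hP
  · have hdi : d i = m i + m j - 2 * d j := by
      conv_lhs => rw [hP.1, contribExp_apply_left hij]
    rw [Finset.sum_eq_single (m i - d j)]
    · rw [if_pos ((hmatch _ (by omega)).mpr ⟨hP, rfl⟩), hdi]
    · intro k hk hne
      rw [if_neg fun h => hne ((hmatch k (by simpa [Nat.lt_succ_iff] using hk)).mp h).2]
    · intro h
      simp only [Finset.mem_range] at h
      omega
  · refine Finset.sum_eq_zero fun k hk => if_neg fun h => hP ?_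
    exact ((hmatch k (by simpa [Nat.lt_succ_iff] using hk)).mp h).1

theorem coeff_msubst_substFamily (hij : i ≠ j) (F : MvPowerSeries (Fin n) S)
    (m : Fin n →₀ ℕ) :
    coeff m (msubst (substFamily i j) F)
      = ∑ q ∈ Finset.range (min (m i) (m j) + 1),
          ((m i + m j - 2 * q).choose (m i - q) : S) * coeff (contribExp i j m q) F := by
  have hinj : Set.InjOn (contribExp i j m) (Finset.range (min (m i) (m j) + 1)) :=
    fun q _ q' _ h => by simpa using congrArg (· j) h
  change ∑ d ∈ _, coeff d F * coeff m (∏ l, substFamily i j l ^ d l) = _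
  symm
  calc _ = ∑ q ∈ Finset.range (min (m i) (m j) + 1), coeff (contribExp i j m q) F
          * coeff m (∏ l, substFamily i j l ^ contribExp i j m q l) := by
        refine Finset.sum_congr rfl fun q hq => ?_
        have hq' : q ≤ m i ∧ q ≤ m j := by simp only [Finset.mem_range] at hq; omega
        rw [coeff_prod_pow_substFamily hij, contribExp_apply_right,
          if_pos ⟨rfl, hq'⟩, mul_comm]
    _ = _ := by
        rw [← Finset.sum_image
          (f := fun d => coeff d F * coeff m (∏ l, substFamily i j l ^ d l)) hinj]
        refine Finset.sum_subset (fun d hd => ?_) fun d _ hd => ?_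
        · obtain ⟨q, hq, rfl⟩ := Finset.mem_image.mp hd
          exact contribExp_mem_Iic hij (by simp only [Finset.mem_range] at hq; omega)
        · rw [coeff_prod_pow_substFamily hij, if_neg, mul_zero]
          rintro ⟨hd', h1, h2⟩
          refine hd (Finset.mem_image.mpr ⟨d j, ?_, hd'.symm⟩)
          simp only [Finset.mem_range]
          omega

theorem coeff_msubst_substFamily_of_le (hij : i ≠ j) (F : MvPowerSeries (Fin n) S)
    {m : Fin n →₀ ℕ} (h : m j ≤ m i) :
    coeff m (msubst (substFamily i j) F)
      = coeff (contribExp i j m (m j)) F + ∑ q ∈ Finset.range (m j),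
          ((m i + m j - 2 * q).choose (m i - q) : S) * coeff (contribExp i j m q) F := by
  have htop : m i + m j - 2 * m j = m i - m j := by omega
  rw [coeff_msubst_substFamily hij, min_eq_right h, Finset.sum_range_succ, htop,
    Nat.choose_self, Nat.cast_one, one_mul, add_comm]

theorem coeff_swap_msubst_substFamily (hij : i ≠ j) (F : MvPowerSeries (Fin n) S)
    (m : Fin n →₀ ℕ) :
    coeff (equivMapDomain (Equiv.swap i j) m) (msubst (substFamily i j) F)
      = coeff m (msubst (substFamily i j) F) := by
  have hi : equivMapDomain (Equiv.swap i j) m i = m j := by simp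
  have hj : equivMapDomain (Equiv.swap i j) m j = m i := by simp
  rw [coeff_msubst_substFamily hij, coeff_msubst_substFamily hij, hi, hj, min_comm, add_comm (m j)]
  refine Finset.sum_congr rfl fun q hq => ?_
  simp only [Finset.mem_range] at hq
  rw [contribExp_swap, Nat.choose_symm_of_eq_add (a := m j - q) (b := m i - q) (by omega)]

theorem coeff_leadExp_msubst_substFamily (hij : i ≠ j) (F : MvPowerSeries (Fin n) S)
    (d : Fin n →₀ ℕ) :
    coeff (leadExp i j d) (msubst (substFamily i j) F)
      = coeff d F + ∑ q ∈ Finset.range (d j),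
          ((leadExp i j d i + leadExp i j d j - 2 * q).choose (leadExp i j d i - q) : S)
            * coeff (contribExp i j (leadExp i j d) q) F := by
  have hle : leadExp i j d j ≤ leadExp i j d i := by
    rw [leadExp_apply_left, leadExp_apply_right hij]
    omega
  rw [coeff_msubst_substFamily_of_le hij F hle, leadExp_apply_right hij, contribExp_leadExp hij]

-- `coeff_leadExp_msubst_substFamily`, solved for the coefficient of `y^d`.
variable (i j) in
def symmPreimageCoeff (f : MvPowerSeries (Fin n) S) (d : Fin n →₀ ℕ) : S :=
  coeff (leadExp i j d) f - ∑ q ∈ (Finset.range (d j)).attach,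
    ((leadExp i j d i + leadExp i j d j - 2 * q).choose (leadExp i j d i - q) : S)
      * symmPreimageCoeff f (contribExp i j (leadExp i j d) q)
termination_by d j
decreasing_by simp only [contribExp_apply_right]; exact Finset.mem_range.mp q.2

variable (i j) in
def symmPreimage (f : MvPowerSeries (Fin n) S) : MvPowerSeries (Fin n) S :=
  symmPreimageCoeff i j f

theorem coeff_symmPreimage (f : MvPowerSeries (Fin n) S) (d : Fin n →₀ ℕ) :
    coeff d (symmPreimage i j f) = coeff (leadExp i j d) f - ∑ q ∈ Finset.range (d j),
      ((leadExp i j d i + leadExp i j d j - 2 * q).choose (leadExp i j d i - q) : S)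
        * coeff (contribExp i j (leadExp i j d) q) (symmPreimage i j f) := by
  rw [← Finset.sum_attach]
  exact symmPreimageCoeff.eq_1 i j f d

theorem eq_symmPreimage_iff (hij : i ≠ j) {F f : MvPowerSeries (Fin n) S} :
    F = symmPreimage i j f
      ↔ ∀ d, coeff (leadExp i j d) (msubst (substFamily i j) F) = coeff (leadExp i j d) f := by
  constructor
  · rintro rfl d
    rw [coeff_leadExp_msubst_substFamily hij, coeff_symmPreimage, sub_add_cancel]
  · intro h
    ext d
    induction hd : d j using Nat.strong_induction_on generalizing d with
    | _ b ih =>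
      rw [coeff_symmPreimage, ← h d, coeff_leadExp_msubst_substFamily hij, add_sub_assoc,
        left_eq_add, sub_eq_zero]
      refine Finset.sum_congr rfl fun q hq => ?_
      rw [ih q (hd ▸ Finset.mem_range.mp hq) _ (contribExp_apply_right _ _)]

theorem swapVars_msubst_substFamily (hij : i ≠ j) (F : MvPowerSeries (Fin n) S) :
    swapVars i j (msubst (substFamily i j) F) = msubst (substFamily i j) F :=
  funext (coeff_swap_msubst_substFamily hij F)

theorem eq_of_swapVars_eq_of_coeff_leadExp_eq (hij : i ≠ j) {F G : MvPowerSeries (Fin n) S}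
    (hF : swapVars i j F = F) (hG : swapVars i j G = G)
    (h : ∀ d, coeff (leadExp i j d) F = coeff (leadExp i j d) G) : F = G := by
  have hle : ∀ m : Fin n →₀ ℕ, m j ≤ m i → coeff m F = coeff m G := fun m hm => by
    rw [← leadExp_contribExp hij hm]; exact h _
  ext m
  by_cases hm : m j ≤ m i
  · exact hle m hm
  · calc coeff m F = coeff m (swapVars i j F) := by rw [hF]
      _ = coeff m (swapVars i j G) := hle _ (by simp; omega)
      _ = coeff m G := by rw [hG]

theorem msubst_substFamily_injective (hij : i ≠ j) :
    Function.Injective (msubst (substFamily i j) : MvPowerSeries (Fin n) S → _) := by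
  have hleft : ∀ F : MvPowerSeries (Fin n) S, F = symmPreimage i j (msubst (substFamily i j) F) :=
    fun _ => (eq_symmPreimage_iff hij).mpr fun _ => rfl
  intro F G h
  rw [hleft F, hleft G, h]

theorem range_msubst_substFamily (hij : i ≠ j) :
    Set.range (msubst (substFamily i j) : MvPowerSeries (Fin n) S → _)
      = {f | swapVars i j f = f} := by
  refine Set.ext fun f => ⟨?_, fun hf => ⟨symmPreimage i j f, ?_⟩⟩
  · rintro ⟨F, rfl⟩
    exact swapVars_msubst_substFamily hij F
  · exact eq_of_swapVars_eq_of_coeff_leadExp_eq hij (swapVars_msubst_substFamily hij _) hf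
      ((eq_symmPreimage_iff hij).mp rfl)

end SymmSubst

/-- the substitution homomorphism
`Φ : S[[y_1,…,y_n]] → S[[x_1,…,x_n]]`, `y_i ↦ x_i + x_{i+1}`, `y_{i+1} ↦ x_i·x_{i+1}`,
`y_l ↦ x_l` otherwise, is injective with image exactly the `s_i`-invariant power series. -/
theorem subst_injective_range_eq_fixed
    {n : ℕ} (i j : Fin n) (hij : (i : ℕ) + 1 = (j : ℕ)) :
    Function.Injective
      (msubst (fun l : Fin n =>
        if l = i then (X i : MvPowerSeries (Fin n) S) + X j
        else if l = j then X i * X j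
        else X l)) ∧
    Set.range
      (msubst (fun l : Fin n =>
        if l = i then (X i : MvPowerSeries (Fin n) S) + X j
        else if l = j then X i * X j
        else X l))
      = {f : MvPowerSeries (Fin n) S | swapVars i j f = f} := by
  have hne : i ≠ j := Fin.ne_of_val_ne (by omega)
  exact ⟨SymmSubst.msubst_substFamily_injective hne, SymmSubst.range_msubst_substFamily hne⟩

end
end

section
/- Let S be a commutative ring, n ≥ 2, and 1 ≤ i ≤ n−1. Then R = S[[x_1,…,x_n]] is a free module of rank two over the fixed subalgebra R^{s_i} with basis {1, x_i}: every f ∈ R can be written uniquely as f = a + b·x_i with a, b ∈ R^{s_i}. -/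
/- Common setup: substitution of multivariate power series, formal group laws,
formal inverses, and the variable–swapping operation. -/

open MvPowerSeries Finsupp

noncomputable section

variable {S : Type*} [CommRing S]

/-!
Write `s` for the swap of `x_i` and `x_j`. It is an `S`-algebra automorphism, so for `s`-invariant
`a, b` one has `(a + b x_i) - s (a + b x_i) = b (x_i - x_j)`; as `x_i - x_j` is a non-zero-divisor,
`b` is forced to be the divided difference `(f - s f) / (x_i - x_j)` and `a = f - b x_i`.
For existence it remains to divide `f - s f` by `x_i - x_j`, which is a telescoping computation
along each antidiagonal of the exponents of `x_i, x_j`; the quotient is automatically invariant,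
again because `x_i - x_j` is a non-zero-divisor.
-/

open Finset
open scoped nonZeroDivisors

namespace MvPowerSeries

variable {σ τ R : Type*}

theorem coeff_renameEquiv [CommSemiring R] (e : σ ≃ τ) (f : MvPowerSeries σ R) (m : τ →₀ ℕ) :
    coeff m (renameEquiv R e f) = coeff (m.equivMapDomain e.symm) f := by
  have hm : m = embDomain e.toEmbedding (m.equivMapDomain e.symm) := by
    ext k
    simp [embDomain_eq_mapDomain, ← equivMapDomain_eq_mapDomain]
  rw [renameEquiv_apply, ← coeff_embDomain_rename e.toEmbedding, ← hm]
  rfl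

theorem renameEquiv_X [CommSemiring R] (e : σ ≃ τ) (i : σ) :
    renameEquiv R e (X i) = X (e i) :=
  rename_X e i

theorem renameEquiv_swap_renameEquiv_swap [CommSemiring R] [DecidableEq σ] (i j : σ)
    (f : MvPowerSeries σ R) :
    renameEquiv R (Equiv.swap i j) (renameEquiv R (Equiv.swap i j) f) = f := by
  simpa [Equiv.symm_swap] using (renameEquiv R (Equiv.swap i j)).symm_apply_apply f

theorem add_mul_X_sub_renameEquiv_swap [CommRing R] [DecidableEq σ] {i j : σ}
    {a b : MvPowerSeries σ R} (ha : renameEquiv R (Equiv.swap i j) a = a)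
    (hb : renameEquiv R (Equiv.swap i j) b = b) :
    a + b * X i - renameEquiv R (Equiv.swap i j) (a + b * X i) = b * (X i - X j) := by
  rw [map_add, map_mul, ha, hb, renameEquiv_X, Equiv.swap_apply_left]
  ring

theorem eq_zero_of_mul_X_eq_mul_X [CommSemiring R] {i j : σ} (hij : i ≠ j)
    {c : MvPowerSeries σ R} (h : c * X i = c * X j) : c = 0 := by
  have hpow (k : ℕ) : c * X i ^ k = c * X j ^ k := by
    induction k with
    | zero => simp
    | succ k ih => rw [pow_succ, ← mul_assoc, ih, mul_right_comm, h, mul_assoc, ← pow_succ']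
  classical
  ext m
  -- compare coefficients of `x^m x_i^(m_j+1)`: the right side `c x_j^(m_j+1)` has none
  have hm := congrArg (coeff (m + Finsupp.single i (m j + 1))) (hpow (m j + 1))
  rw [X_pow_eq, X_pow_eq, coeff_add_mul_monomial, mul_one, coeff_mul_monomial,
    if_neg fun hle => by simpa [hij.symm] using hle j] at hm
  simpa using hm

theorem X_sub_X_mem_nonZeroDivisors [CommRing R] {i j : σ} (hij : i ≠ j) :
    X i - X j ∈ (MvPowerSeries σ R)⁰ :=
  mem_nonZeroDivisors_iff_right.mpr fun c hc =>
    eq_zero_of_mul_X_eq_mul_X hij (sub_eq_zero.mp (by rw [← mul_sub, hc]))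

theorem mul_X_sub_X_inj [CommRing R] {i j : σ} (hij : i ≠ j) {a b : MvPowerSeries σ R} :
    a * (X i - X j) = b * (X i - X j) ↔ a = b :=
  mul_cancel_right_mem_nonZeroDivisors (X_sub_X_mem_nonZeroDivisors hij)

def updatePair (i j : σ) (m : σ →₀ ℕ) (r s : ℕ) : σ →₀ ℕ :=
  (m.update i r).update j s

section updatePair

variable {i j : σ}

theorem updatePair_tsub_single {k : σ} (hk : k = i ∨ k = j) (m : σ →₀ ℕ) (r s : ℕ) :
    updatePair i j (m - Finsupp.single k 1) r s = updatePair i j m r s := by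
  classical
  ext l
  simp only [updatePair, Finsupp.update_apply, Finsupp.tsub_apply, Finsupp.single_apply]
  split_ifs <;> grind

theorem updatePair_self (m : σ →₀ ℕ) : updatePair i j m (m i) (m j) = m := by
  simp [updatePair, Finsupp.update_self]

theorem updatePair_swap [DecidableEq σ] (m : σ →₀ ℕ) :
    updatePair i j m (m j) (m i) = m.equivMapDomain (Equiv.swap i j) := by
  ext l
  simp only [updatePair, Finsupp.update_apply, Finsupp.equivMapDomain_apply, Equiv.symm_swap]
  split_ifs <;> simp_all [Equiv.swap_apply_of_ne_of_ne]

end updatePair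

section divDiff

variable [CommRing R]

theorem coeff_mul_X_eq_ite [DecidableEq σ] (φ : MvPowerSeries σ R) (s : σ) (m : σ →₀ ℕ) :
    coeff m (φ * X s) = if m s = 0 then 0 else coeff (m - Finsupp.single s 1) φ := by
  rw [X, coeff_mul_monomial, mul_one]
  by_cases h : m s = 0 <;> simp [h, Finsupp.single_le_iff, Nat.one_le_iff_ne_zero]

/-- The divided difference `(f - s f) / (X i - X j)`, `s` swapping `X i` and `X j`: on the
antidiagonal of total `(i, j)`-degree `N = m i + m j + 1`, its coefficients are the partial sums
of the antisymmetric sequence `k ↦ f_{(N - k, k)} - f_{(k, N - k)}`. -/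
def divDiff (i j : σ) (f : MvPowerSeries σ R) : MvPowerSeries σ R := fun m =>
  ∑ k ∈ range (m i + 1), (coeff (updatePair i j m (m i + m j + 1 - k) k) f -
    coeff (updatePair i j m k (m i + m j + 1 - k)) f)

variable {i j : σ}

theorem coeff_divDiff (f : MvPowerSeries σ R) (m : σ →₀ ℕ) :
    coeff m (divDiff i j f) = ∑ k ∈ range (m i + 1),
      (coeff (updatePair i j m (m i + m j + 1 - k) k) f -
        coeff (updatePair i j m k (m i + m j + 1 - k)) f) :=
  rfl

theorem coeff_divDiff_mul_X_left (hij : i ≠ j) (f : MvPowerSeries σ R) (m : σ →₀ ℕ) :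
    coeff m (divDiff i j f * X i) = ∑ k ∈ range (m i),
      (coeff (updatePair i j m (m i + m j - k) k) f -
        coeff (updatePair i j m k (m i + m j - k)) f) := by
  classical
  rw [coeff_mul_X_eq_ite]
  split_ifs with h
  · simp [h]
  · have hi : m i - 1 + 1 = m i := Nat.succ_pred_eq_of_ne_zero h
    have hN : m i - 1 + m j + 1 = m i + m j := by omega
    simp only [coeff_divDiff, Finsupp.tsub_apply, Finsupp.single_eq_same,
      Finsupp.single_eq_of_ne hij.symm, tsub_zero, hi, hN, updatePair_tsub_single (Or.inl rfl)]

theorem coeff_divDiff_mul_X_right (hij : i ≠ j) (f : MvPowerSeries σ R) (m : σ →₀ ℕ) :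
    coeff m (divDiff i j f * X j) = ∑ k ∈ range (m i + 1),
      (coeff (updatePair i j m (m i + m j - k) k) f -
        coeff (updatePair i j m k (m i + m j - k)) f) := by
  classical
  rw [coeff_mul_X_eq_ite]
  split_ifs with h
  · -- the full antidiagonal sum vanishes: reflect `k ↦ m i - k`
    rw [h, add_zero, sum_sub_distrib, eq_comm, sub_eq_zero, ← sum_range_reflect]
    refine sum_congr rfl fun k hk => ?_
    rw [add_tsub_cancel_right, Nat.sub_sub_self (mem_range_succ_iff.mp hk)]
  · have hN : m i + (m j - 1) + 1 = m i + m j := by omega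
    simp only [coeff_divDiff, Finsupp.tsub_apply, Finsupp.single_eq_same,
      Finsupp.single_eq_of_ne hij, tsub_zero, hN, updatePair_tsub_single (Or.inr rfl)]

theorem sub_renameEquiv_swap_eq_divDiff_mul [DecidableEq σ] (hij : i ≠ j)
    (f : MvPowerSeries σ R) :
    f - renameEquiv R (Equiv.swap i j) f = divDiff i j f * (X i - X j) := by
  ext m
  rw [map_sub, coeff_renameEquiv, Equiv.symm_swap, mul_sub, map_sub,
    coeff_divDiff_mul_X_left hij, coeff_divDiff_mul_X_right hij, sum_range_succ,
    add_tsub_cancel_left, updatePair_self, updatePair_swap]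
  ring

theorem renameEquiv_swap_divDiff [DecidableEq σ] (hij : i ≠ j) (f : MvPowerSeries σ R) :
    renameEquiv R (Equiv.swap i j) (divDiff i j f) = divDiff i j f := by
  have h := congrArg (renameEquiv R (Equiv.swap i j)) (sub_renameEquiv_swap_eq_divDiff_mul hij f)
  rw [map_sub, map_mul, map_sub, renameEquiv_swap_renameEquiv_swap, renameEquiv_X, renameEquiv_X,
    Equiv.swap_apply_left, Equiv.swap_apply_right] at h
  rw [← mul_X_sub_X_inj hij, ← sub_renameEquiv_swap_eq_divDiff_mul hij]
  linear_combination h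

end divDiff

end MvPowerSeries

theorem swapVars_eq_renameEquiv {n : ℕ} (i j : Fin n) (f : MvPowerSeries (Fin n) S) :
    swapVars i j f = renameEquiv S (Equiv.swap i j) f := by
  ext m
  rw [coeff_renameEquiv, Equiv.symm_swap]
  rfl

/-- `R = S[[x_1,…,x_n]]` is free of rank two over the fixed subalgebra
`R^{s_i}` with basis `{1, x_i}`: every `f` is uniquely `f = a + b·x_i` with `a, b`
invariant under interchanging `x_i` and `x_{i+1}`. -/
theorem free_rank_two_over_fixed
    {n : ℕ} (i j : Fin n) (hij : (i : ℕ) + 1 = (j : ℕ))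
    (f : MvPowerSeries (Fin n) S) :
    ∃! p : MvPowerSeries (Fin n) S × MvPowerSeries (Fin n) S,
      swapVars i j p.1 = p.1 ∧ swapVars i j p.2 = p.2 ∧ f = p.1 + p.2 * X i := by
  have hne : i ≠ j := Fin.ne_of_val_ne (by omega)
  have hdiv := sub_renameEquiv_swap_eq_divDiff_mul hne f
  simp only [swapVars_eq_renameEquiv]
  refine ⟨(f - divDiff i j f * X i, divDiff i j f),
    ⟨?_, renameEquiv_swap_divDiff hne f, by ring⟩, ?_⟩
  · rw [map_sub, map_mul, renameEquiv_swap_divDiff hne, renameEquiv_X, Equiv.swap_apply_left]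
    linear_combination -hdiv
  · rintro ⟨a, b⟩ ⟨ha, hb, rfl⟩
    have hb_eq : b = divDiff i j (a + b * X i) := by
      rw [← mul_X_sub_X_inj hne, ← hdiv, add_mul_X_sub_renameEquiv_swap ha hb]
    simp only [← hb_eq, add_sub_cancel_right]
end
end
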